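/- Assume k₂, k₃, k₄, δ*, ω > 0, let L > 0 and set I₁ᴴ = (k₂L − δ*ω)/(2(k₃+k₄)). If k₂ < k₃ + k₄, then the conditions (δ*ω − k₂L)/(2(k₃+k₄)) ≤ L/2 and (k₂L − δ*ω)/(2(k₃+k₄)) ≤ L/2 both hold if and only if L ≥ L₀ = δ*ω/(k₂ + k₃ + k₄), and at L = L₀ the Halo equilibrium point satisfies I₁ᴴ = −L₀/2. -/
import Mathlib


/-- Existence range of the Halo equilibria: for `k₂, k₃, k₄, δ*, ω > 0` with
`k₂ < k₃ + k₄` and `L > 0`, the conditions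
`(δ*ω − k₂L)/(2(k₃+k₄)) ≤ L/2` and `(k₂L − δ*ω)/(2(k₃+k₄)) ≤ L/2`
both hold if and only if `L ≥ L₀ = δ*ω/(k₂+k₃+k₄)`; moreover at the
bifurcation value `L = L₀` the Halo equilibrium satisfies `I₁ᴴ = −L₀/2`. -/
theorem hopf_halo_range (k₂ k₃ k₄ δs ω L : ℝ) (hk₂ : k₂ > 0) (hk₃ : k₃ > 0)
    (hk₄ : k₄ > 0) (hδ : δs > 0) (hω : ω > 0) (hkk : k₂ < k₃ + k₄)
    (hL : L > 0) :
    (((δs * ω - k₂ * L) / (2 * (k₃ + k₄)) ≤ L / 2 ∧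
      (k₂ * L - δs * ω) / (2 * (k₃ + k₄)) ≤ L / 2) ↔
      L ≥ δs * ω / (k₂ + k₃ + k₄)) ∧
    (k₂ * (δs * ω / (k₂ + k₃ + k₄)) - δs * ω) / (2 * (k₃ + k₄))
      = -(δs * ω / (k₂ + k₃ + k₄) / 2) := by
  have hA : (0:ℝ) < 2 * (k₃ + k₄) := by linarith
  have hS : (0:ℝ) < k₂ + k₃ + k₄ := by linarith
  constructor
  · constructor
    · rintro ⟨h1, -⟩
      rw [ge_iff_le, div_le_iff₀ hS]
      rw [div_le_div_iff₀ hA two_pos] at h1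
      nlinarith
    · intro h
      rw [ge_iff_le, div_le_iff₀ hS] at h
      constructor <;> rw [div_le_div_iff₀ hA two_pos] <;> nlinarith
  · field_simp
    ring
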